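/- Define y(t) = ∑_{n=1}^∞ H_n · t^n/(1−2n) for |t| < 1. Then for every real t with 0 < t < 1, the function g(t) = y(t²)/t is differentiable at t with derivative g'(t) = log(1−t²)/(t²·(1−t²)). -/

import Mathlib

open Real

/-- `y(t) = ∑_{n=1}^∞ Hₙ tⁿ/(1-2n)`. -/
noncomputable def y (t : ℝ) : ℝ :=
  ∑' n : ℕ, (harmonic (n + 1) : ℝ) * t ^ (n + 1) / (1 - 2 * (n + 1))

/-!
Since `1 - 2(n+1) = -(2n+1)`, the function `y(s²)/s = -∑ H_{n+1} s^{2n+1}/(2n+1)` is an odd power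
series whose termwise derivative is `-∑ H_{n+1} s^{2n}`, legitimately so inside the unit interval.
After multiplication by `s²` this is `-∑ H_{n+1} x^{n+1}` at `x = s²`, and that generating function
of the harmonic numbers is the Cauchy product of `∑ x^{n+1}/(n+1) = -log(1-x)` with
`∑ xⁿ = 1/(1-x)`.
-/

theorem hasSum_harmonic_succ_mul_pow {x : ℝ} (hx : |x| < 1) :
    HasSum (fun n : ℕ => (harmonic (n + 1) : ℝ) * x ^ (n + 1)) (-log (1 - x) / (1 - x)) := by
  have hx' : |(|x|)| < 1 := by rwa [abs_abs]
  have hlog := hasSum_pow_div_log_of_abs_lt_one hx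
  have hgeom := hasSum_geometric_of_abs_lt_one hx
  have hlog_norm : Summable fun n : ℕ => ‖x ^ (n + 1) / (n + 1)‖ :=
    (hasSum_pow_div_log_of_abs_lt_one hx').summable.congr fun n => by
      rw [norm_div, norm_pow, norm_eq_abs, norm_of_nonneg (by positivity)]
  have hgeom_norm : Summable fun n : ℕ => ‖x ^ n‖ := by
    simpa [abs_pow] using summable_geometric_of_abs_lt_one hx'
  have hprod := hasSum_sum_range_mul_of_summable_norm hlog_norm hgeom_norm
  rw [hlog.tsum_eq, hgeom.tsum_eq, ← div_eq_mul_inv] at hprod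
  refine hprod.congr_fun fun n => ?_
  rw [harmonic, Rat.cast_sum, Finset.sum_mul]
  refine Finset.sum_congr rfl fun k hk => ?_
  rw [← Nat.add_sub_of_le (Finset.mem_range_succ_iff.mp hk)]
  push_cast
  rw [Nat.add_sub_cancel_left]
  ring

theorem hasDerivAt_tsum_div_mul_pow_odd {b : ℕ → ℝ} {r t : ℝ}
    (hb : Summable fun n => ‖b n‖ * r ^ (2 * n)) (ht : |t| < r) :
    HasDerivAt (fun s => ∑' n, b n / (2 * n + 1) * s ^ (2 * n + 1))
      (∑' n, b n * t ^ (2 * n)) t := by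
  have hr : 0 < r := (abs_nonneg t).trans_lt ht
  refine hasDerivAt_tsum_of_isPreconnected (g' := fun n s => b n * s ^ (2 * n)) (y₀ := 0)
    hb isOpen_Ioo isPreconnected_Ioo (fun n s _ => ?_) (fun n s hs => ?_)
    ⟨neg_lt_zero.mpr hr, hr⟩ (by simp) (abs_lt.mp ht)
  · refine ((hasDerivAt_pow (2 * n + 1) s).const_mul (b n / (2 * n + 1))).congr_deriv ?_
    rw [Nat.add_sub_cancel]
    push_cast
    field_simp
  · rw [norm_mul, norm_pow, pow_mul, pow_mul]
    gcongr
    exact (abs_lt.mpr hs).le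

theorem hasSum_harmonic_succ_mul_pow_two_mul {t : ℝ} (ht0 : t ≠ 0) (ht1 : |t| < 1) :
    HasSum (fun n : ℕ => (harmonic (n + 1) : ℝ) * t ^ (2 * n))
      (-log (1 - t ^ 2) / (t ^ 2 * (1 - t ^ 2))) := by
  have hsq : |t ^ 2| < 1 := by rw [abs_pow]; exact pow_lt_one₀ (abs_nonneg t) ht1 two_ne_zero
  rw [mul_comm, ← div_div]
  refine ((hasSum_harmonic_succ_mul_pow hsq).div_const (t ^ 2)).congr_fun fun n => ?_
  rw [← pow_mul, mul_add, mul_one, pow_add, ← mul_assoc,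
    mul_div_cancel_right₀ _ (pow_ne_zero 2 ht0)]

theorem y_sq_div (s : ℝ) :
    y (s ^ 2) / s = ∑' n : ℕ, -(harmonic (n + 1) : ℝ) / (2 * n + 1) * s ^ (2 * n + 1) := by
  rw [y, ← tsum_div_const]
  congr 1 with n
  rcases eq_or_ne s 0 with rfl | hs
  · simp
  · rw [show (1 : ℝ) - 2 * (n + 1) = -(2 * n + 1) by ring]
    field_simp
    ring

theorem stmt13 (t : ℝ) (ht0 : 0 < t) (ht1 : t < 1) :
    HasDerivAt (fun s : ℝ => y (s ^ 2) / s)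
      (Real.log (1 - t ^ 2) / (t ^ 2 * (1 - t ^ 2))) t := by
  obtain ⟨r, htr, hr1⟩ := exists_between ht1
  have hr0 : 0 < r := ht0.trans htr
  have hb : Summable fun n : ℕ => ‖-(harmonic (n + 1) : ℝ)‖ * r ^ (2 * n) := by
    refine (hasSum_harmonic_succ_mul_pow_two_mul hr0.ne' (by rwa [abs_of_pos hr0])).summable.congr
      fun n => ?_
    rw [norm_neg, norm_of_nonneg (by exact_mod_cast (harmonic_pos n.succ_ne_zero).le)]
  have hderiv := hasDerivAt_tsum_div_mul_pow_odd hb (by rwa [abs_of_pos ht0])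
  simp_rw [neg_mul, tsum_neg,
    (hasSum_harmonic_succ_mul_pow_two_mul ht0.ne' (by rwa [abs_of_pos ht0])).tsum_eq] at hderiv
  simp_rw [y_sq_div]
  convert hderiv using 1
  rw [neg_div, neg_neg]
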